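/- arXiv:1806.02389 — 7 statements merged into one kernel-verified Lean document; each statement's English description precedes it below -/
import Mathlib

section
/- Let M be a map from histograms x ∈ ℕ^N to probability measures on a measurable space Y that is d_X-private. Let k ≥ 2 and let x, x' ∈ ℕ^N satisfy ‖x−x'‖₁ ≤ k, ‖x‖₁ = ‖x'‖₁, and let V = {i : xᵢ ≠ x'ᵢ} be the set of indices where x and x' differ, with |V| ≥ 2. Then for every measurable S ⊆ Y, M(x)(S) ≤ exp(k · max_{i,j ∈ V} d_X(i,j)) · M(x')(S). -/
open MeasureTheory Finset

/-- Two histograms `x, x'` over a universe of size `N` are `(i,j)`-neighbors: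
`‖x − x'‖₁ ≤ 2`, `xᵢ ≠ x'ᵢ` and `xⱼ ≠ x'ⱼ`. -/
def Neighbors {N : ℕ} (i j : Fin N) (x x' : Fin N → ℕ) : Prop :=
  (∑ l, |(x l : ℤ) - (x' l : ℤ)|) ≤ 2 ∧ x i ≠ x' i ∧ x j ≠ x' j

/-- `dX` is a privacy budget: nonnegative, symmetric, zero on the diagonal,
satisfying the triangle inequality. -/
def PrivacyBudget {N : ℕ} (dX : Fin N → Fin N → ℝ) : Prop :=
  (∀ i j, 0 ≤ dX i j) ∧ (∀ i j, dX i j = dX j i) ∧ (∀ i, dX i i = 0) ∧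
    (∀ i j k, dX i j ≤ dX i k + dX k j)

/-- A mechanism `M` (a map from histograms to probability measures on `Y`) is `dX`-private. -/
def DXPrivate {N : ℕ} {Y : Type*} [MeasurableSpace Y]
    (dX : Fin N → Fin N → ℝ) (M : (Fin N → ℕ) → Measure Y) : Prop :=
  ∀ i j : Fin N, i ≠ j → ∀ x x' : Fin N → ℕ, Neighbors i j x x' →
    ∀ S : Set Y, MeasurableSet S →
      M x S ≤ ENNReal.ofReal (Real.exp (dX i j)) * M x' S

/-! Two histograms of equal size at ℓ¹ distance at most `2n` are joined by at most `n` unit moves,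
each taking one unit from a bin where the current histogram exceeds `x'` to a bin where it falls
short. Consecutive histograms on this path are `(i, j)`-neighbours with `i, j ∈ V`, so each move
costs a factor at most `exp D`, `D = max_{V × V} dX`; and since `D ≥ 0` (as `dX` vanishes on the
diagonal), padding the path to `k` moves keeps the bound. -/

section L1Dist

variable {ι : Type*} [Fintype ι]

def l1Dist (z z' : ι → ℕ) : ℤ :=
  ∑ l, |(z l : ℤ) - (z' l : ℤ)|

lemma l1Dist_nonneg (z z' : ι → ℕ) : 0 ≤ l1Dist z z' :=
  Finset.sum_nonneg fun _ _ => abs_nonneg _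

lemma l1Dist_eq_zero_iff {z z' : ι → ℕ} : l1Dist z z' = 0 ↔ z = z' := by
  simp [l1Dist, Finset.sum_eq_zero_iff_of_nonneg, sub_eq_zero, funext_iff]

end L1Dist

section MoveUnit

variable {ι : Type*} [DecidableEq ι]

/-- Moves one unit from bin `i` to bin `j`; only meaningful when `0 < z i`, as `ℕ`-subtraction
truncates. -/
def moveUnit (z : ι → ℕ) (i j : ι) : ι → ℕ :=
  fun l => z l - (if l = i then 1 else 0) + (if l = j then 1 else 0)

lemma cast_moveUnit {z : ι → ℕ} {i : ι} (hi : 0 < z i) (j l : ι) :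
    (moveUnit z i j l : ℤ) = z l - (if l = i then 1 else 0) + (if l = j then 1 else 0) := by
  have h : (if l = i then 1 else 0) ≤ z l := by
    split_ifs with h
    exacts [h ▸ hi, Nat.zero_le _]
  simp only [moveUnit]
  push_cast [Nat.cast_sub h]
  split_ifs <;> simp

lemma moveUnit_ne_imp_ne {z z' : ι → ℕ} {i j l : ι} (hi : z' i < z i) (hj : z j < z' j)
    (hl : moveUnit z i j l ≠ z' l) : z l ≠ z' l := by
  by_cases hli : l = i
  · subst hli; omega
  by_cases hlj : l = j
  · subst hlj; omega
  simpa [moveUnit, hli, hlj] using hl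

variable [Fintype ι]

lemma sum_moveUnit {z : ι → ℕ} {i : ι} (hi : 0 < z i) (j : ι) :
    ∑ l, moveUnit z i j l = ∑ l, z l := by
  have h := congrArg (fun f : ι → ℤ => ∑ l, f l) (funext (cast_moveUnit hi j))
  simp only [Finset.sum_add_distrib, Finset.sum_sub_distrib, Finset.sum_ite_eq',
    Finset.mem_univ, if_true, sub_add_cancel] at h
  exact_mod_cast h

lemma l1Dist_moveUnit_left {z : ι → ℕ} {i j : ι} (hi : 0 < z i) (hij : i ≠ j) :
    l1Dist z (moveUnit z i j) = 2 := by
  have h (l : ι) : |(z l : ℤ) - moveUnit z i j l| =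
      (if l = i then 1 else 0) + (if l = j then 1 else 0) := by
    rw [cast_moveUnit hi]
    split_ifs <;> simp_all
  simp only [l1Dist, h, Finset.sum_add_distrib, Finset.sum_ite_eq', Finset.mem_univ, if_true]
  norm_num

lemma l1Dist_moveUnit {z z' : ι → ℕ} {i j : ι} (hi : z' i < z i) (hj : z j < z' j) :
    l1Dist (moveUnit z i j) z' = l1Dist z z' - 2 := by
  have h (l : ι) : |(moveUnit z i j l : ℤ) - z' l| =
      |(z l : ℤ) - z' l| - (if l = i then 1 else 0) - (if l = j then 1 else 0) := by
    rw [cast_moveUnit (by omega)]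
    by_cases hli : l = i <;> by_cases hlj : l = j
    · subst hli hlj; omega
    · subst hli
      simp only [if_true, if_neg hlj]
      rw [abs_of_nonneg, abs_of_nonneg] <;> omega
    · subst hlj
      simp only [if_true, if_neg hli]
      rw [abs_of_nonpos, abs_of_nonpos] <;> omega
    · simp [hli, hlj]
  simp only [l1Dist, h, Finset.sum_sub_distrib, Finset.sum_ite_eq', Finset.mem_univ, if_true]
  ring

end MoveUnit

lemma neighbors_moveUnit {N : ℕ} {z : Fin N → ℕ} {i j : Fin N} (hi : 0 < z i)
    (hij : i ≠ j) :
    Neighbors i j z (moveUnit z i j) := by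
  refine ⟨(l1Dist_moveUnit_left hi hij).le, ?_, ?_⟩ <;> simp [moveUnit, hij, hij.symm]
  omega

lemma exists_lt_of_sum_eq_of_ne {ι : Type*} [Fintype ι] {z z' : ι → ℕ}
    (hsum : ∑ l, z l = ∑ l, z' l) (hne : z ≠ z') : ∃ i, z' i < z i := by
  by_contra! h
  exact hne <| funext fun l =>
    (Finset.sum_eq_sum_iff_of_le fun l _ => h l).1 hsum l (mem_univ l)

lemma exists_lt_and_lt_of_sum_eq_of_ne {ι : Type*} [Fintype ι] {z z' : ι → ℕ}
    (hsum : ∑ l, z l = ∑ l, z' l) (hne : z ≠ z') : ∃ i j, z' i < z i ∧ z j < z' j := by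
  obtain ⟨i, hi⟩ := exists_lt_of_sum_eq_of_ne hsum hne
  obtain ⟨j, hj⟩ := exists_lt_of_sum_eq_of_ne hsum.symm hne.symm
  exact ⟨i, j, hi, hj⟩

namespace DXPrivate

variable {N : ℕ} {Y : Type*} [MeasurableSpace Y] {dX : Fin N → Fin N → ℝ}
  {M : (Fin N → ℕ) → Measure Y}

theorem le_ofReal_exp_mul_of_l1Dist_le (hpriv : DXPrivate dX M) {V : Finset (Fin N)} {D : ℝ}
    (hD₀ : 0 ≤ D) (hD : ∀ i ∈ V, ∀ j ∈ V, dX i j ≤ D) {x' : Fin N → ℕ} {S : Set Y}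
    (hS : MeasurableSet S) (n : ℕ) (z : Fin N → ℕ) (hdist : l1Dist z x' ≤ 2 * n)
    (hsum : ∑ l, z l = ∑ l, x' l) (hV : ∀ l, z l ≠ x' l → l ∈ V) :
    M z S ≤ ENNReal.ofReal (Real.exp (n * D)) * M x' S := by
  induction n generalizing z with
  | zero =>
    obtain rfl : z = x' :=
      l1Dist_eq_zero_iff.1 (le_antisymm (by simpa using hdist) (l1Dist_nonneg _ _))
    simp
  | succ n ih =>
    by_cases hz : z = x'
    · subst hz
      exact le_mul_of_one_le_left zero_le
        (ENNReal.one_le_ofReal.2 (Real.one_le_exp (by positivity)))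
    obtain ⟨i, j, hi, hj⟩ := exists_lt_and_lt_of_sum_eq_of_ne hsum hz
    have hij : i ≠ j := by rintro rfl; omega
    have hdist₁ : l1Dist (moveUnit z i j) x' ≤ 2 * n := by
      rw [l1Dist_moveUnit hi hj]; push_cast at hdist; linarith
    have hsum₁ : ∑ l, moveUnit z i j l = ∑ l, x' l := (sum_moveUnit (by omega) j).trans hsum
    have hV₁ (l) (hl : moveUnit z i j l ≠ x' l) : l ∈ V := hV l (moveUnit_ne_imp_ne hi hj hl)
    calc M z S ≤ ENNReal.ofReal (Real.exp (dX i j)) * M (moveUnit z i j) S :=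
          hpriv i j hij z _ (neighbors_moveUnit (by omega) hij) S hS
      _ ≤ ENNReal.ofReal (Real.exp D) * (ENNReal.ofReal (Real.exp (n * D)) * M x' S) := by
          gcongr
          · exact hD i (hV i hi.ne') j (hV j hj.ne)
          · exact ih _ hdist₁ hsum₁ hV₁
      _ = ENNReal.ofReal (Real.exp ((n + 1 : ℕ) * D)) * M x' S := by
          rw [← mul_assoc, ← ENNReal.ofReal_mul (Real.exp_nonneg _), ← Real.exp_add]
          push_cast; ring_nf

end DXPrivate

/-- Group privacy: if `M` is `dX`-private and `x, x'` satisfy `‖x − x'‖₁ ≤ k`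
(with `k ≥ 2`) and have the same size, then for every measurable `S`,
`M x S ≤ exp (k · max_{i,j ∈ V} dX i j) · M x' S`, where `V` is the set of
indices where `x` and `x'` differ. -/
theorem stmt_2 {N : ℕ} {Y : Type*} [MeasurableSpace Y]
    (dX : Fin N → Fin N → ℝ) (hdX : PrivacyBudget dX)
    (M : (Fin N → ℕ) → Measure Y)
    (hpriv : DXPrivate dX M)
    (k : ℕ) (x x' : Fin N → ℕ)
    (hdist : (∑ l, |(x l : ℤ) - (x' l : ℤ)|) ≤ (k : ℤ))
    (hsize : ∑ l, x l = ∑ l, x' l)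
    (V : Finset (Fin N)) (hV : V = Finset.univ.filter fun l => x l ≠ x' l)
    (hVcard : 2 ≤ V.card)
    (S : Set Y) (hS : MeasurableSet S) :
    M x S ≤ ENNReal.ofReal (Real.exp ((k : ℝ) *
        (V ×ˢ V).sup'
          (Finset.Nonempty.product (Finset.card_pos.mp (by omega))
            (Finset.card_pos.mp (by omega)))
          (fun p => dX p.1 p.2))) * M x' S := by
  have hD (i) (hi : i ∈ V) (j) (hj : j ∈ V) :
      dX i j ≤ (V ×ˢ V).sup' (.product ⟨i, hi⟩ ⟨i, hi⟩) (fun p => dX p.1 p.2) :=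
    le_sup' (fun p : Fin N × Fin N => dX p.1 p.2) (mk_mem_product hi hj)
  obtain ⟨a, ha⟩ : V.Nonempty := card_pos.1 (by omega)
  have hD₀ := hdX.2.2.1 a ▸ hD a ha a ha
  refine hpriv.le_ofReal_exp_mul_of_l1Dist_le hD₀ hD hS k x (by unfold l1Dist; omega) hsize ?_
  simp [hV]
end

section
/- Let q' : ℕ^N → ℝ^k and c ∈ ℝ^k with cᵢ > 0 for all i. Suppose that for all indices i ≠ j in {1,…,N} and all (i,j)-neighbors x, x' ∈ ℕ^N, ‖q'(x) − q'(x')‖₁ ≤ d_X(i,j). Then the Laplace mechanism M_{Lap,c}(·, c⊙q') is d_X-private: for all (i,j)-neighbors x, x' ∈ ℕ^N and all Lebesgue-measurable S ⊆ ℝ^k, M_{Lap,c}(x, c⊙q')(S) ≤ exp(d_X(i,j)) · M_{Lap,c}(x', c⊙q')(S). -/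
open MeasureTheory Finset

/-- The Laplace mechanism with scales `c`, centered at `a ∈ ℝ^k`: the probability
measure on `ℝ^k` with Lebesgue density `z ↦ ∏ i, (1/(2cᵢ)) exp(−|zᵢ − aᵢ|/cᵢ)`. -/
noncomputable def lapMech {k : ℕ} (c a : Fin k → ℝ) : Measure (Fin k → ℝ) :=
  volume.withDensity fun z =>
    ENNReal.ofReal (∏ i, (1 / (2 * c i)) * Real.exp (-|z i - a i| / c i))

/-- If `‖q'(x) − q'(x')‖₁ ≤ dX i j` for all `(i,j)`-neighbors, then the Laplace
mechanism `M_{Lap,c}(·, c ⊙ q')` is `dX`-private. -/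
theorem stmt_3 {N k : ℕ} (dX : Fin N → Fin N → ℝ) (hdX : PrivacyBudget dX)
    (q' : (Fin N → ℕ) → (Fin k → ℝ)) (c : Fin k → ℝ) (hc : ∀ i, 0 < c i)
    (hsens : ∀ i j : Fin N, i ≠ j → ∀ x x' : Fin N → ℕ, Neighbors i j x x' →
      (∑ i, |q' x i - q' x' i|) ≤ dX i j) :
    DXPrivate dX (fun x => lapMech c (fun i => c i * q' x i)) := by
  intro i j hij x x' hnb S hS
  have hd := hsens i j hij x x' hnb
  simp only [lapMech]
  rw [withDensity_apply _ hS, withDensity_apply _ hS,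
    ← lintegral_const_mul' _ _ (by exact ENNReal.ofReal_ne_top)]
  apply lintegral_mono
  intro z
  dsimp only
  rw [← ENNReal.ofReal_mul (Real.exp_nonneg _)]
  apply ENNReal.ofReal_le_ofReal
  have hP : (0:ℝ) ≤ ∏ l, (1 / (2 * c l)) := by
    apply Finset.prod_nonneg
    intro l _
    have := hc l
    positivity
  calc ∏ l, (1 / (2 * c l)) * Real.exp (-|z l - c l * q' x l| / c l)
      = (∏ l, (1 / (2 * c l))) * Real.exp (∑ l, -|z l - c l * q' x l| / c l) := by
        rw [Finset.prod_mul_distrib, Real.exp_sum]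
    _ ≤ (∏ l, (1 / (2 * c l))) * Real.exp (dX i j + ∑ l, -|z l - c l * q' x' l| / c l) := by
        apply mul_le_mul_of_nonneg_left _ hP
        apply Real.exp_le_exp.2
        rw [← sub_le_iff_le_add, ← Finset.sum_sub_distrib]
        calc ∑ l, (-|z l - c l * q' x l| / c l - -|z l - c l * q' x' l| / c l)
            ≤ ∑ l, |q' x l - q' x' l| := by
              apply Finset.sum_le_sum
              intro l _
              have hcl := hc l
              rw [div_sub_div_same, div_le_iff₀ hcl]
              have h1 : -|z l - c l * q' x l| - -|z l - c l * q' x' l|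
                  ≤ |(z l - c l * q' x' l) - (z l - c l * q' x l)| := by
                have := abs_sub_abs_le_abs_sub (z l - c l * q' x' l) (z l - c l * q' x l)
                linarith
              calc -|z l - c l * q' x l| - -|z l - c l * q' x' l|
                  ≤ |(z l - c l * q' x' l) - (z l - c l * q' x l)| := h1
                _ = |q' x l - q' x' l| * c l := by
                    rw [show (z l - c l * q' x' l) - (z l - c l * q' x l)
                      = c l * (q' x l - q' x' l) by ring, abs_mul, abs_of_pos hcl]
                    ring
          _ ≤ dX i j := hd
    _ = Real.exp (dX i j) * ∏ l, (1 / (2 * c l)) * Real.exp (-|z l - c l * q' x' l| / c l) := by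
        rw [Finset.prod_mul_distrib, ← Real.exp_sum, Real.exp_add]
        ring
end

section
/- Let Q, Q' ∈ ℝ^{k×N}, c ∈ ℝ^k with cᵢ > 0, n ∈ ℕ, and let x ∈ ℕ^N be a histogram with ‖x‖₁ = n. Let M(x) be the Laplace mechanism M_{Lap,c}(x, c⊙Q'), i.e., the law of c⊙Q'x + Y with Yᵢ independent Laplace with scale cᵢ. Then ∫_{ℝ^k} ‖z − Qx‖₂² dM(x)(z) ≤ 2 ( n² ‖c⊙Q' − Q‖₂² + 2 ‖c‖₂² ), where ‖A‖₂² = Σ_{i,l} A_{i,l}² for a matrix A and ‖c‖₂² = Σᵢ cᵢ². -/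
/-!
Write `a = c ⊙ Q'x` for the centre of the mechanism and `b = Qx`. Coordinatewise
`(zᵢ - bᵢ)² ≤ 2 (zᵢ - aᵢ)² + 2 (aᵢ - bᵢ)²`; the Laplace density factorises over the coordinates
and its second absolute moment is the Gamma integral `2 cᵢ²`, so the expected error is at most
`∑ᵢ (4 cᵢ² + 2 (aᵢ - bᵢ)²)`. Finally `aᵢ - bᵢ = ∑ₗ (cᵢ Q'ᵢₗ - Qᵢₗ) xₗ`, and Cauchy–Schwarz together
with `‖x‖₂ ≤ ‖x‖₁ = n` bounds its square by `n² ∑ₗ (cᵢ Q'ᵢₗ - Qᵢₗ)²`.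
-/

open MeasureTheory Finset

open Real Nat

noncomputable def laplacePDF (c a u : ℝ) : ℝ := 1 / (2 * c) * exp (-|u - a| / c)

section LaplacePDF

variable {c : ℝ} (a : ℝ)

lemma laplacePDF_nonneg (hc : 0 < c) (u : ℝ) : 0 ≤ laplacePDF c a u := by
  have := hc.le
  unfold laplacePDF
  positivity

lemma continuous_laplacePDF : Continuous (laplacePDF c a) := by
  unfold laplacePDF
  fun_prop

lemma integral_abs_sub_pow_mul_laplacePDF (hc : 0 < c) (m : ℕ) :
    ∫ u, |u - a| ^ m * laplacePDF c a u = m ! * c ^ m := by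
  let g : ℝ → ℝ := fun v => 1 / (2 * c) * (v ^ ((m + 1 : ℝ) - 1) * exp (-(c⁻¹ * v)))
  have hg : ∀ u, |u - a| ^ m * laplacePDF c a u = g |u - a| := fun u => by
    simp only [g, laplacePDF, add_sub_cancel_right, rpow_natCast]
    ring_nf
  simp_rw [hg]
  rw [integral_sub_right_eq_self (fun v => g |v|), integral_comp_abs, integral_const_mul,
    integral_rpow_mul_exp_neg_mul_Ioi (by positivity) (inv_pos.2 hc), Gamma_nat_eq_factorial,
    one_div c⁻¹, inv_inv, rpow_add_one hc.ne', rpow_natCast]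
  field_simp

lemma integrable_abs_sub_pow_mul_laplacePDF (hc : 0 < c) (m : ℕ) :
    Integrable fun u => |u - a| ^ m * laplacePDF c a u :=
  .of_integral_ne_zero (by rw [integral_abs_sub_pow_mul_laplacePDF a hc]; positivity)

lemma integrable_laplacePDF (hc : 0 < c) : Integrable (laplacePDF c a) := by
  simpa using integrable_abs_sub_pow_mul_laplacePDF a hc 0

lemma integral_laplacePDF (hc : 0 < c) : ∫ u, laplacePDF c a u = 1 := by
  simpa using integral_abs_sub_pow_mul_laplacePDF a hc 0

lemma integrable_affine_sq_mul_laplacePDF (hc : 0 < c) (s t : ℝ) :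
    Integrable fun u => (s * (u - a) ^ 2 + t) * laplacePDF c a u := by
  simp_rw [add_mul, mul_assoc, ← sq_abs (_ - a)]
  exact ((integrable_abs_sub_pow_mul_laplacePDF a hc 2).const_mul s).add
    ((integrable_laplacePDF a hc).const_mul t)

lemma integral_affine_sq_mul_laplacePDF (hc : 0 < c) (s t : ℝ) :
    ∫ u, (s * (u - a) ^ 2 + t) * laplacePDF c a u = 2 * s * c ^ 2 + t := by
  simp_rw [add_mul, mul_assoc, ← sq_abs (_ - a)]
  rw [integral_add ((integrable_abs_sub_pow_mul_laplacePDF a hc 2).const_mul s)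
    ((integrable_laplacePDF a hc).const_mul t), integral_const_mul, integral_const_mul,
    integral_abs_sub_pow_mul_laplacePDF a hc, integral_laplacePDF a hc, factorial_two]
  push_cast
  ring

end LaplacePDF

section Product

variable {ι : Type*} [Fintype ι] [DecidableEq ι]

lemma comp_eval_mul_prod_eq_prod_update (p : ι → ℝ → ℝ) (i : ι) (f : ℝ → ℝ) (z : ι → ℝ) :
    f (z i) * ∏ j, p j (z j) = ∏ j, Function.update p i (fun u => f u * p i u) j (z j) := by
  rw [← mul_prod_erase _ _ (mem_univ i), ← mul_prod_erase _ _ (mem_univ i),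
    Function.update_self, mul_assoc]
  congr 2
  exact prod_congr rfl fun j hj => by rw [Function.update_of_ne (ne_of_mem_erase hj)]

lemma integrable_comp_eval_mul_prod {p : ι → ℝ → ℝ} (hp : ∀ j, Integrable (p j)) (i : ι)
    {f : ℝ → ℝ} (hf : Integrable fun u => f u * p i u) :
    Integrable fun z : ι → ℝ => f (z i) * ∏ j, p j (z j) := by
  simp_rw [comp_eval_mul_prod_eq_prod_update p i f]
  refine Integrable.fintype_prod fun j => ?_
  rcases eq_or_ne j i with rfl | hji
  · simpa using hf
  · simpa [hji] using hp j

lemma integral_comp_eval_mul_prod {p : ι → ℝ → ℝ} (hp : ∀ j, ∫ u, p j u = 1) (i : ι)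
    (f : ℝ → ℝ) :
    ∫ z : ι → ℝ, f (z i) * ∏ j, p j (z j) = ∫ u, f u * p i u := by
  simp_rw [comp_eval_mul_prod_eq_prod_update p i f]
  rw [integral_fintype_prod_volume_eq_prod, ← mul_prod_erase _ _ (mem_univ i),
    Function.update_self,
    prod_eq_one fun j hj => by rw [Function.update_of_ne (ne_of_mem_erase hj), hp], mul_one]

end Product

lemma lintegral_sum_sq_sub_lapMech_le {k : ℕ} {c : Fin k → ℝ} (hc : ∀ i, 0 < c i)
    (a b : Fin k → ℝ) :
    ∫⁻ z, ENNReal.ofReal (∑ i, (z i - b i) ^ 2) ∂lapMech c a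
      ≤ ENNReal.ofReal (∑ i, (4 * c i ^ 2 + 2 * (a i - b i) ^ 2)) := by
  let p : Fin k → ℝ → ℝ := fun j => laplacePDF (c j) (a j)
  let q : Fin k → ℝ → ℝ := fun i u => 2 * (u - a i) ^ 2 + 2 * (a i - b i) ^ 2
  have hp_nonneg : ∀ z : Fin k → ℝ, 0 ≤ ∏ j, p j (z j) := fun z =>
    prod_nonneg fun j _ => laplacePDF_nonneg _ (hc j) _
  have hq_nonneg : ∀ i u, 0 ≤ q i u := fun i u => by positivity
  have hq_int : ∀ i, Integrable fun z : Fin k → ℝ => q i (z i) * ∏ j, p j (z j) := fun i =>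
    integrable_comp_eval_mul_prod (fun j => integrable_laplacePDF _ (hc j)) i
      (integrable_affine_sq_mul_laplacePDF _ (hc i) 2 _)
  have hp_meas : Measurable fun z : Fin k → ℝ => ENNReal.ofReal (∏ j, p j (z j)) :=
    (Finset.measurable_prod _ fun j _ =>
      (continuous_laplacePDF _).measurable.comp (measurable_pi_apply j)).ennreal_ofReal
  calc ∫⁻ z, ENNReal.ofReal (∑ i, (z i - b i) ^ 2) ∂lapMech c a
      = ∫⁻ z : Fin k → ℝ,
          ENNReal.ofReal (∏ j, p j (z j)) * ENNReal.ofReal (∑ i, (z i - b i) ^ 2) :=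
        lintegral_withDensity_eq_lintegral_mul _ hp_meas (by fun_prop)
    _ ≤ ∫⁻ z : Fin k → ℝ, ENNReal.ofReal (∑ i, q i (z i) * ∏ j, p j (z j)) := by
        refine lintegral_mono fun z => ?_
        rw [← ENNReal.ofReal_mul (hp_nonneg z), ← sum_mul, mul_comm]
        have hsq : ∀ i, (z i - b i) ^ 2 ≤ q i (z i) := fun i => by
          nlinarith [sq_nonneg (z i - 2 * a i + b i)]
        gcongr with i
        exacts [hp_nonneg z, hsq i]
    _ = ENNReal.ofReal (∫ z : Fin k → ℝ, ∑ i, q i (z i) * ∏ j, p j (z j)) :=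
        (ofReal_integral_eq_lintegral_ofReal (integrable_finsetSum _ fun i _ => hq_int i)
          (ae_of_all _ fun z => sum_nonneg fun i _ =>
            mul_nonneg (hq_nonneg _ _) (hp_nonneg z))).symm
    _ = ENNReal.ofReal (∑ i, (4 * c i ^ 2 + 2 * (a i - b i) ^ 2)) := by
        rw [integral_finsetSum _ fun i _ => hq_int i]
        congr 1
        refine sum_congr rfl fun i _ => ?_
        rw [integral_comp_eval_mul_prod (fun j => integral_laplacePDF _ (hc j)),
          integral_affine_sq_mul_laplacePDF _ (hc i)]
        ring

lemma sq_sum_mul_le_sum_sq_mul_sq_sum {ι : Type*} (s : Finset ι) (w x : ι → ℝ)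
    (hx : ∀ l ∈ s, 0 ≤ x l) :
    (∑ l ∈ s, w l * x l) ^ 2 ≤ (∑ l ∈ s, w l ^ 2) * (∑ l ∈ s, x l) ^ 2 :=
  (sum_mul_sq_le_sq_mul_sq s w x).trans <|
    mul_le_mul_of_nonneg_left (sum_sq_le_sq_sum_of_nonneg hx) (sum_nonneg fun _ _ => sq_nonneg _)

/-- Expected squared ℓ₂ error of the dX-private Laplace mechanism:
`∫ ‖z − Qx‖₂² dM(x)(z) ≤ 2 (n² ‖c⊙Q' − Q‖₂² + 2‖c‖₂²)`. -/
theorem stmt_4 {k N : ℕ} (Q Q' : Matrix (Fin k) (Fin N) ℝ)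
    (c : Fin k → ℝ) (hc : ∀ i, 0 < c i) (n : ℕ)
    (x : Fin N → ℕ) (hx : ∑ l, x l = n) :
    ∫⁻ z, ENNReal.ofReal (∑ i, (z i - Q.mulVec (fun l => (x l : ℝ)) i) ^ 2)
        ∂ (lapMech c (fun i => c i * Q'.mulVec (fun l => (x l : ℝ)) i))
      ≤ ENNReal.ofReal (2 * ((n : ℝ) ^ 2 * (∑ i, ∑ l, (c i * Q' i l - Q i l) ^ 2)
          + 2 * ∑ i, (c i) ^ 2)) := by
  refine (lintegral_sum_sq_sub_lapMech_le hc _ _).trans (ENNReal.ofReal_le_ofReal ?_)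
  have hbias : ∀ i, (c i * Q'.mulVec (fun l => (x l : ℝ)) i - Q.mulVec (fun l => (x l : ℝ)) i) ^ 2
      ≤ (n : ℝ) ^ 2 * ∑ l, (c i * Q' i l - Q i l) ^ 2 := fun i => by
    have hrow : c i * Q'.mulVec (fun l => (x l : ℝ)) i - Q.mulVec (fun l => (x l : ℝ)) i
        = ∑ l, (c i * Q' i l - Q i l) * x l := by
      simp only [Matrix.mulVec, dotProduct, mul_sum, ← sum_sub_distrib]
      exact sum_congr rfl fun l _ => by ring
    rw [hrow, mul_comm, ← hx, Nat.cast_sum]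
    exact sq_sum_mul_le_sum_sq_mul_sq_sum _ _ _ fun _ _ => Nat.cast_nonneg _
  rw [sum_add_distrib, ← mul_sum, ← mul_sum, mul_sum _ _ ((n : ℝ) ^ 2)]
  linarith [sum_le_sum fun i (_ : i ∈ univ) => hbias i]
end

section
/- Let Q, Q' ∈ ℝ^{k×N} with k ≥ 1, c ∈ ℝ^k with cᵢ > 0, n ∈ ℕ, and let x ∈ ℕ^N be a histogram with ‖x‖₁ = n. Let M(x) be the Laplace mechanism M_{Lap,c}(x, c⊙Q'). Then for every δ ∈ (0,1], M(x)( { z ∈ ℝ^k : ‖z − Qx‖_∞ ≥ n · max_{i∈[k]} ‖cᵢQ'_{i,:} − Q_{i,:}‖_∞ + ln(k/δ) · max_{i∈[k]} cᵢ } ) ≤ δ. Equivalently, with probability at least 1−δ, ‖Z − Qx‖_∞ < n max_i ‖cᵢQ'_{i,:} − Q_{i,:}‖_∞ + ln(k/δ) max_i cᵢ for Z ∼ M(x). -/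
open MeasureTheory Finset

/-! Under `lapMech c a` the coordinates are independent Laplace variables, so the `i`-th one
deviates from `aᵢ` by at least `T ≥ 0` with probability at most `exp (-T / cᵢ)`. A union bound over
the `k` coordinates with `T = log (k / δ) · maxᵢ cᵢ` bounds the probability of
`‖Z - a‖∞ ≥ T` by `δ`. The centre `a = c ⊙ Q'x` is deterministically within
`n · maxᵢ ‖cᵢQ'ᵢ,: - Qᵢ,:‖∞` of `Qx` (Hölder with `‖x‖₁ = n`), and the triangle inequality
finishes. -/

open Set Real

noncomputable def laplaceDensity (c a t : ℝ) : ℝ := 1 / (2 * c) * exp (-|t - a| / c)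

noncomputable def laplaceMeasure (c a : ℝ) : Measure ℝ :=
  volume.withDensity fun t => ENNReal.ofReal (laplaceDensity c a t)

section Laplace

variable {c a s : ℝ}

lemma laplaceDensity_nonneg (hc : 0 ≤ c) (t : ℝ) : 0 ≤ laplaceDensity c a t := by
  unfold laplaceDensity; positivity

lemma laplaceDensity_neg (c a t : ℝ) : laplaceDensity c a (-t) = laplaceDensity c (-a) t := by
  rw [laplaceDensity, laplaceDensity, ← abs_neg (-t - a)]
  ring_nf

lemma laplaceDensity_of_le {t : ℝ} (h : a ≤ t) :
    laplaceDensity c a t = 1 / (2 * c) * exp (a / c) * exp (-c⁻¹ * t) := by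
  rw [laplaceDensity, abs_of_nonneg (sub_nonneg.2 h), mul_assoc, ← exp_add]
  ring_nf

lemma integrableOn_laplaceDensity_Ioi (hc : 0 < c) (h : a ≤ s) :
    IntegrableOn (laplaceDensity c a) (Ioi s) :=
  IntegrableOn.congr_fun
    ((integrableOn_exp_mul_Ioi (neg_neg_of_pos (inv_pos.2 hc)) s).const_mul _)
    (fun _ ht => (laplaceDensity_of_le (h.trans (le_of_lt ht))).symm) measurableSet_Ioi

lemma integral_laplaceDensity_Ioi (hc : 0 < c) (h : a ≤ s) :
    ∫ t in Ioi s, laplaceDensity c a t = exp (-(s - a) / c) / 2 := by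
  rw [setIntegral_congr_fun measurableSet_Ioi
      (fun _ ht => laplaceDensity_of_le (h.trans (le_of_lt ht))), integral_const_mul,
    integral_exp_mul_Ioi (neg_neg_of_pos (inv_pos.2 hc)),
    show -(s - a) / c = a / c + -c⁻¹ * s by ring, exp_add]
  field_simp

lemma integrableOn_laplaceDensity_Iic (hc : 0 < c) (h : s ≤ a) :
    IntegrableOn (laplaceDensity c a) (Iic s) := by
  have := ((integrableOn_Ici_iff_integrableOn_Ioi (f := laplaceDensity c (-a))).2
    (integrableOn_laplaceDensity_Ioi hc (neg_le_neg h))).comp_neg_Iic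
  simpa only [laplaceDensity_neg, neg_neg] using this

lemma integral_laplaceDensity_Iic (hc : 0 < c) (h : s ≤ a) :
    ∫ t in Iic s, laplaceDensity c a t = exp (-(a - s) / c) / 2 := by
  calc ∫ t in Iic s, laplaceDensity c a t = ∫ t in Iic s, laplaceDensity c (-a) (-t) := by
        simp only [laplaceDensity_neg, neg_neg]
    _ = exp (-(a - s) / c) / 2 := by
        rw [integral_comp_neg_Iic, integral_laplaceDensity_Ioi hc (neg_le_neg h)]
        ring_nf

lemma integrable_laplaceDensity (hc : 0 < c) : Integrable (laplaceDensity c a) := by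
  rw [← integrableOn_univ, ← Iic_union_Ioi (a := a)]
  exact (integrableOn_laplaceDensity_Iic hc le_rfl).union
    (integrableOn_laplaceDensity_Ioi hc le_rfl)

lemma integral_laplaceDensity (hc : 0 < c) : ∫ t, laplaceDensity c a t = 1 := by
  rw [← setIntegral_univ, ← Iic_union_Ioi (a := a), setIntegral_union (Iic_disjoint_Ioi le_rfl)
    measurableSet_Ioi (integrableOn_laplaceDensity_Iic hc le_rfl)
    (integrableOn_laplaceDensity_Ioi hc le_rfl), integral_laplaceDensity_Iic hc le_rfl,
    integral_laplaceDensity_Ioi hc le_rfl]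
  norm_num

lemma laplaceMeasure_apply (hc : 0 < c) {B : Set ℝ} (hB : MeasurableSet B) :
    laplaceMeasure c a B = ENNReal.ofReal (∫ t in B, laplaceDensity c a t) := by
  rw [laplaceMeasure, withDensity_apply _ hB, ofReal_integral_eq_lintegral_ofReal
    (integrable_laplaceDensity hc).integrableOn
    (Filter.Eventually.of_forall (laplaceDensity_nonneg hc.le))]

lemma laplaceMeasure_le_abs_sub_le (hc : 0 < c) {T : ℝ} (hT : 0 ≤ T) :
    laplaceMeasure c a {t | T ≤ |t - a|} ≤ ENNReal.ofReal (exp (-T / c)) := by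
  have hsub : {t | T ≤ |t - a|} ⊆ Iic (a - T) ∪ Ici (a + T) := fun t ht => by
    rcases le_abs'.1 (show T ≤ |t - a| from ht) with h | h
    · exact Or.inl (show t ≤ a - T by linarith)
    · exact Or.inr (show a + T ≤ t by linarith)
  calc laplaceMeasure c a {t | T ≤ |t - a|}
      ≤ laplaceMeasure c a (Iic (a - T)) + laplaceMeasure c a (Ici (a + T)) :=
        (measure_mono hsub).trans (measure_union_le _ _)
    _ = ENNReal.ofReal (exp (-T / c) / 2) + ENNReal.ofReal (exp (-T / c) / 2) := by
        rw [laplaceMeasure_apply hc measurableSet_Iic, laplaceMeasure_apply hc measurableSet_Ici,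
          integral_Ici_eq_integral_Ioi, integral_laplaceDensity_Iic hc (by linarith),
          integral_laplaceDensity_Ioi hc (by linarith), sub_sub_cancel, add_sub_cancel_left]
    _ = ENNReal.ofReal (exp (-T / c)) := by
        rw [← ENNReal.ofReal_add (by positivity) (by positivity), add_halves]

end Laplace

theorem withDensity_pi_preimage_eval {ι E : Type*} [Fintype ι] [DecidableEq ι]
    [MeasurableSpace E] {μ : ι → Measure E} [∀ j, SigmaFinite (μ j)] {f : ι → E → ℝ}
    (hf_nonneg : ∀ j t, 0 ≤ f j t) (hf_int : ∀ j, Integrable (f j) (μ j))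
    (i : ι) (hf_one : ∀ j ≠ i, ∫ t, f j t ∂μ j = 1) {B : Set E} (hB : MeasurableSet B) :
    (Measure.pi μ).withDensity (fun z => ENNReal.ofReal (∏ j, f j (z j)))
        (Function.eval i ⁻¹' B)
      = (μ i).withDensity (fun t => ENNReal.ofReal (f i t)) B := by
  -- On the cylinder the density is `∏ j, g j (z j)`, which Fubini factorizes.
  set g := Function.update f i (B.indicator (f i))
  have hgi : g i = B.indicator (f i) := Function.update_self _ _ _
  have hgj : ∀ j ≠ i, g j = f j := fun j hj => Function.update_of_ne hj _ _
  have hg_nonneg : ∀ j t, 0 ≤ g j t := by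
    intro j t
    rcases eq_or_ne j i with rfl | hj
    · exact hgi ▸ indicator_nonneg (fun t _ => hf_nonneg j t) t
    · exact hgj j hj ▸ hf_nonneg j t
  have hg_int : ∀ j, Integrable (g j) (μ j) := by
    intro j
    rcases eq_or_ne j i with rfl | hj
    · exact hgi ▸ (hf_int j).indicator hB
    · exact hgj j hj ▸ hf_int j
  have hcyl : (Function.eval i ⁻¹' B).indicator (fun z => ENNReal.ofReal (∏ j, f j (z j)))
      = fun z => ENNReal.ofReal (∏ j, g j (z j)) := by
    ext z
    by_cases hz : z i ∈ B
    · rw [indicator_of_mem (show z ∈ Function.eval i ⁻¹' B from hz)]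
      congr 2 with j
      rcases eq_or_ne j i with rfl | hj
      · rw [hgi, indicator_of_mem hz]
      · rw [hgj j hj]
    · rw [indicator_of_notMem (show z ∉ Function.eval i ⁻¹' B from hz), eq_comm,
        ENNReal.ofReal_eq_zero]
      exact (Finset.prod_eq_zero (Finset.mem_univ i) (by rw [hgi, indicator_of_notMem hz])).le
  rw [withDensity_apply _ (measurable_pi_apply i hB), withDensity_apply _ hB,
    ← lintegral_indicator (measurable_pi_apply i hB), hcyl,
    ← ofReal_integral_eq_lintegral_ofReal (Integrable.fintype_prod hg_int)
      (Filter.Eventually.of_forall fun z => Finset.prod_nonneg fun j _ => hg_nonneg j (z j)),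
    integral_fintype_prod_eq_prod,
    Finset.prod_eq_single i (fun j _ hj => by rw [hgj j hj, hf_one j hj]) (by simp), hgi,
    integral_indicator hB, ofReal_integral_eq_lintegral_ofReal (hf_int i).integrableOn
      (Filter.Eventually.of_forall (hf_nonneg i))]

lemma pi_norm_eq_ciSup_abs {ι : Type*} [Fintype ι] (v : ι → ℝ) : ‖v‖ = ⨆ i, |v i| :=
  le_antisymm
    ((pi_norm_le_iff_of_nonneg (Real.iSup_nonneg fun i => abs_nonneg (v i))).2
      fun i => (Real.norm_eq_abs _).trans_le
        (le_ciSup (f := fun i => |v i|) (Finite.bddAbove_range _) i))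
    (Real.iSup_le (fun i => norm_le_pi_norm v i) (norm_nonneg v))

lemma abs_dotProduct_le_norm_mul_sum_abs {ι : Type*} [Fintype ι] (u v : ι → ℝ) :
    |u ⬝ᵥ v| ≤ ‖u‖ * ∑ l, |v l| :=
  calc |u ⬝ᵥ v| ≤ ∑ l, |u l * v l| := Finset.abs_sum_le_sum_abs _ _
    _ ≤ ∑ l, ‖u‖ * |v l| := Finset.sum_le_sum fun l _ => by
        rw [abs_mul, ← Real.norm_eq_abs (u l)]
        exact mul_le_mul_of_nonneg_right (norm_le_pi_norm u l) (abs_nonneg _)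
    _ = ‖u‖ * ∑ l, |v l| := (Finset.mul_sum _ _ _).symm

lemma norm_mulVec_le_ciSup_norm_mul_sum_abs {m n : Type*} [Fintype m] [Fintype n]
    (R : Matrix m n ℝ) (v : n → ℝ) : ‖R.mulVec v‖ ≤ (⨆ i, ‖R i‖) * ∑ l, |v l| := by
  have hsum : 0 ≤ ∑ l, |v l| := Finset.sum_nonneg fun l _ => abs_nonneg (v l)
  refine (pi_norm_le_iff_of_nonneg
    (mul_nonneg (Real.iSup_nonneg fun i => norm_nonneg (R i)) hsum)).2 fun i => ?_
  rw [Real.norm_eq_abs]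
  exact (abs_dotProduct_le_norm_mul_sum_abs (R i) v).trans
    (mul_le_mul_of_nonneg_right
      (le_ciSup (f := fun i => ‖R i‖) (Finite.bddAbove_range _) i) hsum)

lemma lapMech_eq_withDensity_pi {k : ℕ} (c a : Fin k → ℝ) :
    lapMech c a = (Measure.pi fun _ => volume).withDensity
      fun z => ENNReal.ofReal (∏ i, laplaceDensity (c i) (a i) (z i)) := by
  rw [lapMech, volume_pi]
  rfl

lemma lapMech_preimage_eval {k : ℕ} {c : Fin k → ℝ} (hc : ∀ i, 0 < c i) (a : Fin k → ℝ)
    (i : Fin k) {B : Set ℝ} (hB : MeasurableSet B) :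
    lapMech c a (Function.eval i ⁻¹' B) = laplaceMeasure (c i) (a i) B := by
  rw [lapMech_eq_withDensity_pi]
  exact withDensity_pi_preimage_eval (fun j => laplaceDensity_nonneg (hc j).le)
    (fun j => integrable_laplaceDensity (hc j)) i (fun j _ => integral_laplaceDensity (hc j)) hB

lemma lapMech_le_norm_sub_le {k : ℕ} (hk : 0 < k) {c : Fin k → ℝ} (hc : ∀ i, 0 < c i)
    (a : Fin k → ℝ) {L : ℝ} (hL : 0 ≤ L) :
    lapMech c a {z | L * (⨆ i, c i) ≤ ‖z - a‖} ≤ k * ENNReal.ofReal (exp (-L)) := by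
  have : Nonempty (Fin k) := ⟨⟨0, hk⟩⟩
  set T := L * ⨆ i, c i
  have hc_le : ∀ i, c i ≤ ⨆ j, c j := fun i => le_ciSup (Finite.bddAbove_range c) i
  have hT : 0 ≤ T := mul_nonneg hL (Real.iSup_nonneg fun i => (hc i).le)
  have hsub : {z | T ≤ ‖z - a‖} ⊆ ⋃ i, Function.eval i ⁻¹' {t | T ≤ |t - a i|} := by
    intro z hz
    obtain ⟨i, hi⟩ := exists_eq_ciSup_of_finite (f := fun i => |z i - a i|)
    exact mem_iUnion.2 ⟨i, show T ≤ |z i - a i| from hi ▸ pi_norm_eq_ciSup_abs (z - a) ▸ hz⟩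
  have hcoord : ∀ i, lapMech c a (Function.eval i ⁻¹' {t | T ≤ |t - a i|})
      ≤ ENNReal.ofReal (exp (-L)) := by
    intro i
    rw [lapMech_preimage_eval hc a i (measurableSet_le measurable_const (by fun_prop))]
    refine (laplaceMeasure_le_abs_sub_le (hc i) hT).trans (ENNReal.ofReal_le_ofReal ?_)
    rw [exp_le_exp, neg_div, neg_le_neg_iff, le_div_iff₀ (hc i)]
    exact mul_le_mul_of_nonneg_left (hc_le i) hL
  calc lapMech c a {z | T ≤ ‖z - a‖}
      ≤ ∑ i, lapMech c a (Function.eval i ⁻¹' {t | T ≤ |t - a i|}) :=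
        (measure_mono hsub).trans (measure_iUnion_fintype_le _ _)
    _ ≤ ∑ _ : Fin k, ENNReal.ofReal (exp (-L)) := Finset.sum_le_sum fun i _ => hcoord i
    _ = k * ENNReal.ofReal (exp (-L)) := by simp

/-- High-probability ℓ∞ accuracy of the dX-private Laplace mechanism: for every `δ ∈ (0,1]`,
the probability that `‖Z − Qx‖∞ ≥ n·maxᵢ ‖cᵢQ'ᵢ,: − Qᵢ,:‖∞ + ln(k/δ)·maxᵢ cᵢ` is at most `δ`. -/
theorem stmt_6 {k N : ℕ} (hk : 0 < k) (Q Q' : Matrix (Fin k) (Fin N) ℝ)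
    (c : Fin k → ℝ) (hc : ∀ i, 0 < c i) (n : ℕ)
    (x : Fin N → ℕ) (hx : ∑ l, x l = n)
    (δ : ℝ) (hδ0 : 0 < δ) (hδ1 : δ ≤ 1) :
    lapMech c (fun i => c i * Q'.mulVec (fun l => (x l : ℝ)) i)
      {z | (⨆ i, |z i - Q.mulVec (fun l => (x l : ℝ)) i|) ≥
        (n : ℝ) * (⨆ i, ‖(fun l => c i * Q' i l - Q i l)‖)
          + Real.log ((k : ℝ) / δ) * (⨆ i, c i)}
      ≤ ENNReal.ofReal δ := by
  set v : Fin N → ℝ := fun l => (x l : ℝ)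
  set a : Fin k → ℝ := fun i => c i * Q'.mulVec v i
  set b := Q.mulVec v
  set R : Matrix (Fin k) (Fin N) ℝ := Matrix.of fun i l => c i * Q' i l - Q i l
  have hbias : ‖a - b‖ ≤ n * ⨆ i, ‖R i‖ := by
    have hab : a - b = R.mulVec v := by
      ext i
      simp only [a, b, R, Pi.sub_apply, Matrix.mulVec, dotProduct, Matrix.of_apply,
        Finset.mul_sum, ← Finset.sum_sub_distrib]
      exact Finset.sum_congr rfl fun l _ => by ring
    have hv : ∑ l, |v l| = n := by simp [v, ← hx]
    simpa only [hab, hv, mul_comm] using norm_mulVec_le_ciSup_norm_mul_sum_abs R v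
  calc lapMech c a {z | (⨆ i, |z i - b i|) ≥ n * (⨆ i, ‖R i‖) + log (k / δ) * ⨆ i, c i}
      ≤ lapMech c a {z | log (k / δ) * (⨆ i, c i) ≤ ‖z - a‖} := measure_mono fun z hz => by
        have hz' : n * (⨆ i, ‖R i‖) + log (k / δ) * (⨆ i, c i) ≤ ‖z - b‖ := by
          rw [pi_norm_eq_ciSup_abs]; exact hz
        have htri := norm_sub_le_norm_sub_add_norm_sub z a b
        show _ ≤ ‖z - a‖
        linarith
    _ ≤ k * ENNReal.ofReal (exp (-log (k / δ))) := lapMech_le_norm_sub_le hk hc a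
        (log_nonneg ((one_le_div hδ0).2 (hδ1.trans (by exact_mod_cast hk))))
    _ = ENNReal.ofReal δ := by
        rw [exp_neg, exp_log (by positivity), inv_div, ← ENNReal.ofReal_natCast,
          ← ENNReal.ofReal_mul (Nat.cast_nonneg k), mul_div_cancel₀ δ (by positivity)]
end

section
/- Let R be a finite nonempty set, u' : ℕ^N × R → ℝ a score function, and c > 0. Suppose that for all r ∈ R, all indices i ≠ j in {1,…,N}, and all (i,j)-neighbors x, x' ∈ ℕ^N, |u'(x,r) − u'(x',r)| ≤ c · d_X(i,j). Then the exponential mechanism M_{Exp,c}(·,u') is d_X-private: for all (i,j)-neighbors x, x' and every r ∈ R, [exp(u'(x,r)/(2c)) / Σ_{r'∈R} exp(u'(x,r')/(2c))] ≤ exp(d_X(i,j)) · [exp(u'(x',r)/(2c)) / Σ_{r'∈R} exp(u'(x',r')/(2c))]. -/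
open MeasureTheory Finset

/-- If `|u'(x,r) − u'(x',r)| ≤ c · dX i j` for all `r` and all `(i,j)`-neighbors,
then the exponential mechanism `M_{Exp,c}(·,u')` is `dX`-private. -/
theorem stmt_7 {N : ℕ} (R : Type*) [Fintype R] [Nonempty R]
    (u' : (Fin N → ℕ) → R → ℝ) (c : ℝ) (hc : 0 < c)
    (dX : Fin N → Fin N → ℝ) (hdX : PrivacyBudget dX)
    (hsens : ∀ r : R, ∀ i j : Fin N, i ≠ j → ∀ x x' : Fin N → ℕ,
      Neighbors i j x x' → |u' x r - u' x' r| ≤ c * dX i j) :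
    ∀ i j : Fin N, i ≠ j → ∀ x x' : Fin N → ℕ, Neighbors i j x x' → ∀ r : R,
      Real.exp (u' x r / (2 * c)) / (∑ r' : R, Real.exp (u' x r' / (2 * c)))
        ≤ Real.exp (dX i j) *
          (Real.exp (u' x' r / (2 * c)) / (∑ r' : R, Real.exp (u' x' r' / (2 * c)))) := by
  intro i j hij x x' hne r
  set d := dX i j with hd
  have hd0 : 0 ≤ d := hdX.1 i j
  have key : ∀ s : R, u' x s / (2*c) - u' x' s / (2*c) ≤ d/2 ∧
      u' x' s / (2*c) - u' x s / (2*c) ≤ d/2 := by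
    intro s
    have h := hsens s i j hij x x' hne
    have h1 := abs_le.mp h
    constructor
    · rw [div_sub_div_same]
      rw [div_le_div_iff₀ (by linarith) (by norm_num)]
      nlinarith [h1.2]
    · rw [div_sub_div_same]
      rw [div_le_div_iff₀ (by linarith) (by norm_num)]
      nlinarith [h1.1]
  have hnum : Real.exp (u' x r / (2*c)) ≤ Real.exp (d/2) * Real.exp (u' x' r / (2*c)) := by
    rw [← Real.exp_add]
    exact Real.exp_le_exp.mpr (by linarith [(key r).1])
  have hsumpos : 0 < ∑ r' : R, Real.exp (u' x r' / (2*c)) :=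
    Finset.sum_pos (fun s _ => Real.exp_pos _) Finset.univ_nonempty
  have hsumpos' : 0 < ∑ r' : R, Real.exp (u' x' r' / (2*c)) :=
    Finset.sum_pos (fun s _ => Real.exp_pos _) Finset.univ_nonempty
  have hden : (∑ r' : R, Real.exp (u' x' r' / (2*c))) ≤
      Real.exp (d/2) * ∑ r' : R, Real.exp (u' x r' / (2*c)) := by
    rw [Finset.mul_sum]
    apply Finset.sum_le_sum
    intro s _
    rw [← Real.exp_add]
    exact Real.exp_le_exp.mpr (by linarith [(key s).2])
  have hdenpos : 0 < Real.exp (d/2) * ∑ r' : R, Real.exp (u' x r' / (2*c)) :=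
    mul_pos (Real.exp_pos _) hsumpos
  calc Real.exp (u' x r / (2*c)) / (∑ r' : R, Real.exp (u' x r' / (2*c)))
      ≤ (Real.exp (d/2) * Real.exp (u' x' r / (2*c))) * Real.exp (d/2) /
        (Real.exp (d/2) * ∑ r' : R, Real.exp (u' x r' / (2*c))) := by
        rw [div_le_div_iff₀ hsumpos hdenpos]
        nlinarith [mul_le_mul_of_nonneg_right hnum hdenpos.le]
    _ ≤ (Real.exp (d/2) * Real.exp (u' x' r / (2*c))) * Real.exp (d/2) /
        (∑ r' : R, Real.exp (u' x' r' / (2*c))) := by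
        apply div_le_div_of_nonneg_left (by positivity) hsumpos' hden
    _ = Real.exp d * (Real.exp (u' x' r / (2*c)) / (∑ r' : R, Real.exp (u' x' r' / (2*c)))) := by
        rw [show Real.exp d = Real.exp (d/2) * Real.exp (d/2) from by
          rw [← Real.exp_add]; norm_num]
        ring
end

section
/- Let Q be a finite nonempty set of vectors in ℝ^N (linear queries), σ : Q → Q' a bijection onto a set Q' of vectors in ℝ^N, and write q' = σ(q). Let α ∈ (0,1), β ∈ (0,1), c > 0, and assume m := ln|Q|/α² is a positive integer. Let R = { y ∈ ℕ^N : ‖y‖₁ = m } and let x ∈ ℕ^N with ‖x‖₁ = n. Assume there exists y₀ ∈ R with c · max_{q'∈Q'} |⟨q',x⟩ − ⟨q',y₀⟩| ≤ αn. Let Y be the output of the small database mechanism, i.e., the exponential mechanism M_{Exp,c}(x,u') over R with score u'(x,y) = −c · max_{q'∈Q'} |⟨q',x⟩ − ⟨q',y⟩|. Then with probability at least 1−β, max_{q∈Q} |⟨q,x⟩ − c⟨q',Y⟩| ≤ n · max_{q∈Q} ‖q − c·q'‖_∞ + αn + 2c( (ln N · ln|Q|)/α² + ln(1/β) ). -/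
/-!
Write `D = ln N · ln|Q| / α² + ln(1/β)`. By the triangle inequality the error of `c · q'` on an
output `y` is at most `n · max_q ‖q - c q'‖∞ - u'(y)`, so an output violating the bound scores at
least `2cD` below `y₀`, whose score is at least `-αn`. The exponential mechanism therefore gives it
at most `e^{-D} = β / N^m` times the weight of `y₀`, and there are at most `N^m` histograms of
size `m`, since these are the multisets of size `m` over an `N`-element set.
-/

open MeasureTheory Finset

open Real

theorem Sym.card_le_pow (α : Type*) [Fintype α] [DecidableEq α] (n : ℕ) :
    Fintype.card (Sym α n) ≤ Fintype.card α ^ n := by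
  rw [← card_vector]
  refine Fintype.card_le_of_surjective Sym.ofVector fun s => ?_
  exact ⟨⟨(s : Multiset α).toList, by simp⟩, Sym.ext (Multiset.coe_toList _)⟩

theorem Finset.card_le_pow_of_forall_sum_eq {ι : Type*} [Fintype ι] [DecidableEq ι] {n : ℕ}
    (R : Finset (ι → ℕ)) (hR : ∀ y ∈ R, ∑ i, y i = n) : #R ≤ Fintype.card ι ^ n := by
  let toSym : R → Sym ι n := fun y => (Sym.equivNatSumOfFintype ι n).symm ⟨y, hR y y.2⟩
  have hinj : Function.Injective toSym := fun _ _ h =>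
    Subtype.ext (Subtype.mk.inj ((Sym.equivNatSumOfFintype ι n).symm.injective h))
  calc #R = Fintype.card R := (Fintype.card_coe R).symm
    _ ≤ Fintype.card (Sym ι n) := Fintype.card_le_of_injective toSym hinj
    _ ≤ Fintype.card ι ^ n := Sym.card_le_pow ι n

theorem sum_exp_div_sum_exp_le {ι : Type*} (R B : Finset ι) (u : ι → ℝ) {s t : ℝ} (hs : 0 < s)
    {y₀ : ι} (hy₀ : y₀ ∈ R) (hB : ∀ y ∈ B, u y ≤ u y₀ - t) :
    (∑ y ∈ B, exp (u y / s)) / ∑ y ∈ R, exp (u y / s) ≤ #B * exp (-t / s) := by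
  have hden : exp (u y₀ / s) ≤ ∑ y ∈ R, exp (u y / s) :=
    single_le_sum (f := fun y => exp (u y / s)) (fun _ _ => (exp_pos _).le) hy₀
  have hnum : ∑ y ∈ B, exp (u y / s) ≤ #B * exp ((u y₀ - t) / s) := by
    rw [← nsmul_eq_mul]
    exact sum_le_card_nsmul _ _ _ fun y hy =>
      exp_le_exp.2 (div_le_div_of_nonneg_right (hB y hy) hs.le)
  rw [div_le_iff₀ ((exp_pos _).trans_le hden)]
  calc ∑ y ∈ B, exp (u y / s) ≤ #B * exp ((u y₀ - t) / s) := hnum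
    _ = #B * exp (-t / s) * exp (u y₀ / s) := by rw [mul_assoc, ← exp_add]; ring_nf
    _ ≤ #B * exp (-t / s) * ∑ y ∈ R, exp (u y / s) := by gcongr

theorem abs_sum_mul_le_norm_mul_sum {ι : Type*} [Fintype ι] (v : ι → ℝ) (x : ι → ℕ) :
    |∑ l, v l * x l| ≤ ‖v‖ * ∑ l, (x l : ℝ) := by
  rw [mul_sum]
  refine (abs_sum_le_sum_abs _ _).trans (sum_le_sum fun l _ => ?_)
  rw [abs_mul, Nat.abs_cast]
  exact mul_le_mul_of_nonneg_right (by simpa using norm_le_pi_norm v l) (Nat.cast_nonneg _)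

theorem abs_inner_sub_smul_inner_le {ι : Type*} [Fintype ι] (q q' : ι → ℝ) (x y : ι → ℕ)
    {c : ℝ} (hc : 0 ≤ c) :
    |∑ l, q l * x l - c * ∑ l, q' l * y l|
      ≤ ‖q - c • q'‖ * ∑ l, (x l : ℝ) + c * |∑ l, q' l * x l - ∑ l, q' l * y l| := by
  have hsplit : ∑ l, q l * x l - c * ∑ l, q' l * y l
      = ∑ l, (q - c • q') l * x l + c * (∑ l, q' l * x l - ∑ l, q' l * y l) := by
    simp only [Pi.sub_apply, Pi.smul_apply, smul_eq_mul, sub_mul, sum_sub_distrib, mul_assoc,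
      ← mul_sum]
    ring
  rw [hsplit]
  refine (abs_add_le _ _).trans (add_le_add (abs_sum_mul_le_norm_mul_sum _ x) ?_)
  rw [abs_mul, abs_of_nonneg hc]

theorem stmt_11_general {N : ℕ} (hN : 0 < N) (Q : Finset (Fin N → ℝ)) (hQ : Q.Nonempty)
    (σ : (Fin N → ℝ) → (Fin N → ℝ))
    (α β : ℝ) (hβ : β ∈ Set.Ioo (0 : ℝ) 1)
    (c : ℝ) (hc : 0 < c)
    (m : ℕ) (hmval : (m : ℝ) = Real.log (Q.card : ℝ) / α ^ 2)
    (R : Finset (Fin N → ℕ)) (hRmem : ∀ y : Fin N → ℕ, y ∈ R ↔ ∑ l, y l = m)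
    (x : Fin N → ℕ) (n : ℕ) (hn : ∑ l, x l = n)
    (u' : (Fin N → ℕ) → ℝ)
    (hu' : ∀ y : Fin N → ℕ, u' y =
      -c * Q.sup' hQ (fun q => |(∑ l, σ q l * (x l : ℝ)) - ∑ l, σ q l * (y l : ℝ)|))
    (y₀ : Fin N → ℕ) (hy₀ : y₀ ∈ R)
    (hy₀close : c * Q.sup' hQ
        (fun q => |(∑ l, σ q l * (x l : ℝ)) - ∑ l, σ q l * (y₀ l : ℝ)|) ≤ α * n) :
    (∑ y ∈ R.filter (fun y =>
        Q.sup' hQ (fun q => |(∑ l, q l * (x l : ℝ)) - c * ∑ l, σ q l * (y l : ℝ)|) >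
          (n : ℝ) * Q.sup' hQ (fun q => ‖q - c • σ q‖) + α * n
            + 2 * c * ((Real.log (N : ℝ) * Real.log (Q.card : ℝ)) / α ^ 2
                + Real.log (1 / β))),
      Real.exp (u' y / (2 * c))) / (∑ y ∈ R, Real.exp (u' y / (2 * c))) ≤ β := by
  set D := log N * log Q.card / α ^ 2 + log (1 / β)
  set S := Q.sup' hQ (fun q => ‖q - c • σ q‖)
  have herror : ∀ y, Q.sup' hQ (fun q => |∑ l, q l * (x l : ℝ) - c * ∑ l, σ q l * (y l : ℝ)|)
      ≤ n * S - u' y := fun y => sup'_le _ _ fun q hq => by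
    have h := abs_inner_sub_smul_inner_le q (σ q) x y hc.le
    have hS : ‖q - c • σ q‖ ≤ S := le_sup' (fun q => ‖q - c • σ q‖) hq
    have hdist := le_sup' (fun q => |∑ l, σ q l * (x l : ℝ) - ∑ l, σ q l * (y l : ℝ)|) hq
    rw [← Nat.cast_sum, hn] at h
    rw [hu']
    linarith [mul_le_mul_of_nonneg_right hS (Nat.cast_nonneg (α := ℝ) n),
      mul_le_mul_of_nonneg_left hdist hc.le]
  have hgap : ∀ y ∈ R.filter (fun y => Q.sup' hQ
      (fun q => |∑ l, q l * (x l : ℝ) - c * ∑ l, σ q l * (y l : ℝ)|) > n * S + α * n + 2 * c * D),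
      u' y ≤ u' y₀ - 2 * c * D := fun y hy => by
    have hbad := (mem_filter.1 hy).2
    linarith [herror y, hu' y₀]
  have hexp : (N : ℝ) ^ m * exp (-D) = β := by
    have hD : D = m * log N + log (1 / β) := by rw [hmval]; ring
    rw [hD, exp_neg, exp_add, exp_nat_mul, exp_log (by exact_mod_cast hN),
      exp_log (one_div_pos.2 hβ.1)]
    field_simp
  calc _ ≤ #(R.filter _) * exp (-(2 * c * D) / (2 * c)) :=
        sum_exp_div_sum_exp_le R _ u' (by positivity) hy₀ hgap
    _ ≤ (N : ℝ) ^ m * exp (-D) := by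
        rw [neg_div, mul_div_cancel_left₀ D (by positivity)]
        gcongr
        exact_mod_cast Fintype.card_fin N ▸ card_le_pow_of_forall_sum_eq _
          fun y hy => (hRmem y).1 (mem_filter.1 hy).1
    _ = β := hexp

/-- Utility of the small database mechanism (Proposition 4.4): letting `Y` be the output
of `SmallDB(x, Q', c, α)`, with probability at least `1 − β`,
`max_{q∈Q} |⟨q,x⟩ − c⟨q',Y⟩| ≤ n·max_{q∈Q} ‖q − c·q'‖∞ + αn + 2c((ln N · ln|Q|)/α² + ln(1/β))`.
The probability of the bad event is expressed via the exponential-mechanism weights. -/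
theorem stmt_11 {N : ℕ} (hN : 0 < N) (Q : Finset (Fin N → ℝ)) (hQ : Q.Nonempty)
    (σ : (Fin N → ℝ) → (Fin N → ℝ)) (hσ : Set.InjOn σ Q)
    (α β : ℝ) (hα : α ∈ Set.Ioo (0 : ℝ) 1) (hβ : β ∈ Set.Ioo (0 : ℝ) 1)
    (c : ℝ) (hc : 0 < c)
    (m : ℕ) (hm : 0 < m) (hmval : (m : ℝ) = Real.log (Q.card : ℝ) / α ^ 2)
    (R : Finset (Fin N → ℕ)) (hRmem : ∀ y : Fin N → ℕ, y ∈ R ↔ ∑ l, y l = m)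
    (x : Fin N → ℕ) (n : ℕ) (hn : ∑ l, x l = n)
    (u' : (Fin N → ℕ) → ℝ)
    (hu' : ∀ y : Fin N → ℕ, u' y =
      -c * Q.sup' hQ (fun q => |(∑ l, σ q l * (x l : ℝ)) - ∑ l, σ q l * (y l : ℝ)|))
    (y₀ : Fin N → ℕ) (hy₀ : y₀ ∈ R)
    (hy₀close : c * Q.sup' hQ
        (fun q => |(∑ l, σ q l * (x l : ℝ)) - ∑ l, σ q l * (y₀ l : ℝ)|) ≤ α * n) :
    (∑ y ∈ R.filter (fun y =>
        Q.sup' hQ (fun q => |(∑ l, q l * (x l : ℝ)) - c * ∑ l, σ q l * (y l : ℝ)|) >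
          (n : ℝ) * Q.sup' hQ (fun q => ‖q - c • σ q‖) + α * n
            + 2 * c * ((Real.log (N : ℝ) * Real.log (Q.card : ℝ)) / α ^ 2
                + Real.log (1 / β))),
      Real.exp (u' y / (2 * c))) / (∑ y ∈ R, Real.exp (u' y / (2 * c))) ≤ β :=
  stmt_11_general hN Q hQ σ α β hβ c hc m hmval R hRmem x n hn u' hu' y₀ hy₀ hy₀close
end

section
/- Let X be a finite nonempty set, n ≥ 1, q : X → ℝ^k, φ : X → X, and c ∈ ℝ^k with cᵢ > 0. For a database x ∈ X^n let q̄(x) = (1/n) Σ_{l=1}^n q(x_l) and let M(x) be the probability measure on ℝ^k with Lebesgue density z ↦ ∏ᵢ (1/(2cᵢ)) exp(−|zᵢ − cᵢ·q̄(φ∘x)ᵢ|/cᵢ). Then for every x ∈ X^n, ∫_{ℝ^k} ‖z − q̄(x)‖₂² dM(x)(z) ≤ 2 ( max_{u∈X} ‖c⊙q(φ(u)) − q(u)‖₂² + 2 ‖c‖₂² ), where (c⊙w)ᵢ = cᵢ wᵢ. -/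
/-!
Under `lapMech` the coordinates are independent Laplace variables `zᵢ` with location
`aᵢ = cᵢ q̄(φ∘x)ᵢ` and scale `cᵢ`, so the expected error around `b = q̄(x)` splits over
coordinates. In each, `(zᵢ - bᵢ)² ≤ 2 (zᵢ - aᵢ)² + 2 (aᵢ - bᵢ)²` with `E (zᵢ - aᵢ)² = 2 cᵢ²`, and by Jensen
`∑ᵢ (aᵢ - bᵢ)² = ‖(1/n) ∑ₗ (c ⊙ q(φ xₗ) - q xₗ)‖² ≤ max_u ‖c ⊙ q(φ u) - q u‖²`.
-/

open MeasureTheory Finset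

section Pi

variable {ι : Type*} [Fintype ι] {E : ι → Type*} [∀ i, MeasurableSpace (E i)]
  {μ : ∀ i, Measure (E i)}

theorem lintegral_ofReal_prod_eq_prod [∀ i, SigmaFinite (μ i)] {g : ∀ i, E i → ℝ}
    (hg0 : ∀ i t, 0 ≤ g i t) (hg : ∀ i, Integrable (g i) (μ i)) :
    ∫⁻ x, ENNReal.ofReal (∏ i, g i (x i)) ∂Measure.pi μ =
      ∏ i, ∫⁻ t, ENNReal.ofReal (g i t) ∂μ i := by
  rw [← ofReal_integral_eq_lintegral_ofReal (Integrable.fintype_prod_dep hg)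
      (.of_forall fun x => prod_nonneg fun i _ => hg0 i (x i)),
    integral_fintype_prod_eq_prod,
    ENNReal.ofReal_prod_of_nonneg fun i _ => integral_nonneg (hg0 i)]
  exact prod_congr rfl fun i _ => ofReal_integral_eq_lintegral_ofReal (hg i) (.of_forall (hg0 i))

theorem withDensity_ofReal_prod_eq_pi [∀ i, SigmaFinite (μ i)] {g : ∀ i, E i → ℝ}
    (hg0 : ∀ i t, 0 ≤ g i t) (hg : ∀ i, Integrable (g i) (μ i)) :
    (Measure.pi μ).withDensity (fun x => ENNReal.ofReal (∏ i, g i (x i))) =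
      Measure.pi fun i => (μ i).withDensity fun t => ENNReal.ofReal (g i t) := by
  have := fun i => isFiniteMeasure_withDensity_ofReal (hg i).hasFiniteIntegral
  refine (Measure.pi_eq fun s hs => ?_).symm
  rw [withDensity_apply _ (MeasurableSet.univ_pi hs), Measure.restrict_pi_pi,
    lintegral_ofReal_prod_eq_prod hg0 fun i => (hg i).restrict]
  exact prod_congr rfl fun i _ => (withDensity_apply _ (hs i)).symm

theorem lintegral_sum_comp_eval [∀ i, IsProbabilityMeasure (μ i)] {f : ∀ i, E i → ENNReal}
    (hf : ∀ i, Measurable (f i)) :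
    ∫⁻ x, ∑ i, f i (x i) ∂Measure.pi μ = ∑ i, ∫⁻ t, f i t ∂μ i := by
  refine (lintegral_finsetSum _ fun i _ => (hf i).comp (measurable_pi_apply i)).trans ?_
  exact sum_congr rfl fun i _ => (measurePreserving_eval μ i).lintegral_comp (hf i)

end Pi

noncomputable section

open Real Set
open scoped Nat

theorem integral_pow_mul_exp_neg_div_Ioi {c : ℝ} (hc : 0 < c) (m : ℕ) :
    ∫ t in Ioi (0 : ℝ), t ^ m * exp (-t / c) = c ^ (m + 1) * m ! := by
  have h := integral_rpow_mul_exp_neg_mul_Ioi (a := m + 1) (r := c⁻¹) (by positivity) (by positivity)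
  rw [add_sub_cancel_right, one_div, inv_inv, Gamma_nat_eq_factorial, ← Nat.cast_succ,
    rpow_natCast] at h
  rw [← h]
  refine setIntegral_congr_fun measurableSet_Ioi fun t _ => ?_
  simp only [rpow_natCast, div_eq_inv_mul, mul_neg]

theorem integral_abs_pow_mul_exp_neg_abs_div {c : ℝ} (hc : 0 < c) (m : ℕ) :
    ∫ t, |t| ^ m * exp (-|t| / c) = 2 * (c ^ (m + 1) * m !) :=
  (integral_comp_abs (f := fun t => t ^ m * exp (-t / c))).trans
    (by rw [integral_pow_mul_exp_neg_div_Ioi hc])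

def laplacePDFReal (c a t : ℝ) : ℝ := 1 / (2 * c) * exp (-|t - a| / c)

theorem laplacePDFReal_nonneg {c : ℝ} (hc : 0 ≤ c) (a t : ℝ) : 0 ≤ laplacePDFReal c a t := by
  unfold laplacePDFReal; positivity

theorem measurable_laplacePDFReal (c a : ℝ) : Measurable (laplacePDFReal c a) := by
  unfold laplacePDFReal; fun_prop

theorem integral_abs_sub_pow_mul_laplacePDFReal {c : ℝ} (hc : 0 < c) (a : ℝ) (m : ℕ) :
    ∫ t, |t - a| ^ m * laplacePDFReal c a t = c ^ m * m ! := by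
  have h := integral_sub_right_eq_self (μ := volume) (fun t => |t| ^ m * exp (-|t| / c)) a
  simp only [laplacePDFReal, mul_left_comm _ (1 / (2 * c)), integral_const_mul, h,
    integral_abs_pow_mul_exp_neg_abs_div hc]
  field_simp
  ring

-- A function whose Bochner integral is nonzero is integrable.
theorem integrable_abs_sub_pow_mul_laplacePDFReal {c : ℝ} (hc : 0 < c) (a : ℝ) (m : ℕ) :
    Integrable fun t => |t - a| ^ m * laplacePDFReal c a t :=
  .of_integral_ne_zero <| by rw [integral_abs_sub_pow_mul_laplacePDFReal hc]; positivity

theorem integrable_laplacePDFReal {c : ℝ} (hc : 0 < c) (a : ℝ) :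
    Integrable (laplacePDFReal c a) := by
  simpa using integrable_abs_sub_pow_mul_laplacePDFReal hc a 0

def laplaceReal (c a : ℝ) : Measure ℝ :=
  volume.withDensity fun t => ENNReal.ofReal (laplacePDFReal c a t)

theorem lintegral_abs_sub_pow_laplaceReal {c : ℝ} (hc : 0 < c) (a : ℝ) (m : ℕ) :
    ∫⁻ t, ENNReal.ofReal (|t - a| ^ m) ∂laplaceReal c a = ENNReal.ofReal (c ^ m * m !) := by
  rw [laplaceReal, lintegral_withDensity_eq_lintegral_mul _
      (measurable_laplacePDFReal c a).ennreal_ofReal (by fun_prop),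
    ← integral_abs_sub_pow_mul_laplacePDFReal hc, ofReal_integral_eq_lintegral_ofReal
      (integrable_abs_sub_pow_mul_laplacePDFReal hc a m)
      (.of_forall fun t => mul_nonneg (by positivity) (laplacePDFReal_nonneg hc.le a t))]
  refine lintegral_congr fun t => ?_
  rw [Pi.mul_apply, mul_comm, ENNReal.ofReal_mul (by positivity)]

theorem isProbabilityMeasure_laplaceReal {c : ℝ} (hc : 0 < c) (a : ℝ) :
    IsProbabilityMeasure (laplaceReal c a) :=
  ⟨by simpa using lintegral_abs_sub_pow_laplaceReal hc a 0⟩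

theorem lintegral_sq_sub_laplaceReal_le {c : ℝ} (hc : 0 < c) (a b : ℝ) :
    ∫⁻ t, ENNReal.ofReal ((t - b) ^ 2) ∂laplaceReal c a
      ≤ ENNReal.ofReal (2 * (a - b) ^ 2 + 4 * c ^ 2) := by
  have := isProbabilityMeasure_laplaceReal hc a
  have hpt (t : ℝ) : ENNReal.ofReal ((t - b) ^ 2)
      ≤ 2 * ENNReal.ofReal (|t - a| ^ 2) + ENNReal.ofReal (2 * (a - b) ^ 2) := by
    rw [← ENNReal.ofReal_ofNat 2, ← ENNReal.ofReal_mul zero_le_two,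
      ← ENNReal.ofReal_add (by positivity) (by positivity), sq_abs]
    refine ENNReal.ofReal_le_ofReal ?_
    simpa [mul_add] using add_sq_le (a := t - a) (b := a - b)
  calc ∫⁻ t, ENNReal.ofReal ((t - b) ^ 2) ∂laplaceReal c a
      ≤ ∫⁻ t, 2 * ENNReal.ofReal (|t - a| ^ 2) + ENNReal.ofReal (2 * (a - b) ^ 2)
          ∂laplaceReal c a := lintegral_mono hpt
    _ = ENNReal.ofReal (2 * (a - b) ^ 2 + 4 * c ^ 2) := by
      rw [lintegral_add_right _ measurable_const, lintegral_const_mul _ (by fun_prop),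
        lintegral_abs_sub_pow_laplaceReal hc, lintegral_const, measure_univ, mul_one,
        ← ENNReal.ofReal_ofNat 2, ← ENNReal.ofReal_mul zero_le_two,
        ← ENNReal.ofReal_add (by positivity) (by positivity)]
      ring_nf

theorem lapMech_eq_pi {k : ℕ} {c : Fin k → ℝ} (hc : ∀ i, 0 < c i) (a : Fin k → ℝ) :
    lapMech c a = Measure.pi fun i => laplaceReal (c i) (a i) := by
  rw [lapMech, volume_pi]
  exact withDensity_ofReal_prod_eq_pi (g := fun i => laplacePDFReal (c i) (a i))
    (fun i => laplacePDFReal_nonneg (hc i).le (a i)) fun i => integrable_laplacePDFReal (hc i) (a i)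

end

theorem sum_sq_mean_le_ciSup {X : Type*} [Finite X] {k n : ℕ} (v : X → Fin k → ℝ)
    (x : Fin n → X) :
    ∑ i, (1 / (n : ℝ) * ∑ l, v (x l) i) ^ 2 ≤ ⨆ u, ∑ i, v u i ^ 2 := by
  have hbdd : BddAbove (Set.range fun u => ∑ i, v u i ^ 2) := (Set.finite_range _).bddAbove
  calc ∑ i, (1 / (n : ℝ) * ∑ l, v (x l) i) ^ 2
      ≤ ∑ i, (∑ l, v (x l) i ^ 2) / n := by
        refine sum_le_sum fun i _ => ?_
        have h := sum_div_card_sq_le_sum_sq_div_card (s := univ) (f := fun l => v (x l) i)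
        rwa [card_univ, Fintype.card_fin, ← one_div_mul_eq_div] at h
    _ = (∑ l, ∑ i, v (x l) i ^ 2) / n := by rw [← sum_div, sum_comm]
    _ ≤ ⨆ u, ∑ i, v u i ^ 2 := by
        refine div_le_of_le_mul₀ n.cast_nonneg (Real.iSup_nonneg fun u => by positivity) ?_
        simpa [mul_comm] using sum_le_card_nsmul univ _ _ fun l _ => le_ciSup hbdd (x l)

theorem stmt_17_general {k : ℕ} (X : Type*) [Fintype X] (n : ℕ)
    (q : X → Fin k → ℝ) (φ : X → X) (c : Fin k → ℝ) (hc : ∀ i, 0 < c i)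
    (x : Fin n → X) :
    ∫⁻ z, ENNReal.ofReal (∑ i, (z i - (1 / (n : ℝ)) * ∑ l, q (x l) i) ^ 2)
        ∂ (lapMech c (fun i => c i * ((1 / (n : ℝ)) * ∑ l, q (φ (x l)) i)))
      ≤ ENNReal.ofReal (2 * ((⨆ u : X, ∑ i, (c i * q (φ u) i - q u i) ^ 2)
          + 2 * ∑ i, (c i) ^ 2)) := by
  set a : Fin k → ℝ := fun i => c i * ((1 / (n : ℝ)) * ∑ l, q (φ (x l)) i)
  set b : Fin k → ℝ := fun i => (1 / (n : ℝ)) * ∑ l, q (x l) i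
  have := fun i => isProbabilityMeasure_laplaceReal (hc i) (a i)
  have hab : ∑ i, (a i - b i) ^ 2 ≤ ⨆ u : X, ∑ i, (c i * q (φ u) i - q u i) ^ 2 := by
    convert sum_sq_mean_le_ciSup (fun u i => c i * q (φ u) i - q u i) x using 3 with i
    simp only [a, b, sum_sub_distrib, ← mul_sum]
    ring
  calc ∫⁻ z, ENNReal.ofReal (∑ i, (z i - b i) ^ 2) ∂lapMech c a
      = ∑ i, ∫⁻ t, ENNReal.ofReal ((t - b i) ^ 2) ∂laplaceReal (c i) (a i) := by
        simp_rw [lapMech_eq_pi hc, ENNReal.ofReal_sum_of_nonneg fun i _ => sq_nonneg (_ - b i)]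
        exact lintegral_sum_comp_eval (f := fun i t => ENNReal.ofReal ((t - b i) ^ 2)) fun i => by
          fun_prop
    _ ≤ ∑ i, ENNReal.ofReal (2 * (a i - b i) ^ 2 + 4 * c i ^ 2) :=
        sum_le_sum fun i _ => lintegral_sq_sub_laplaceReal_le (hc i) (a i) (b i)
    _ = ENNReal.ofReal (∑ i, (2 * (a i - b i) ^ 2 + 4 * c i ^ 2)) :=
        (ENNReal.ofReal_sum_of_nonneg fun i _ => by positivity).symm
    _ ≤ _ := by
        refine ENNReal.ofReal_le_ofReal ?_
        rw [sum_add_distrib, ← mul_sum, ← mul_sum]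
        linarith

/-- Expected squared ℓ₂ error of the Laplace mechanism for statistical queries:
`∫ ‖z − q̄(x)‖₂² dM(x)(z) ≤ 2 (max_{u∈X} ‖c⊙q(φ(u)) − q(u)‖₂² + 2‖c‖₂²)`. -/
theorem stmt_17 {k : ℕ} (X : Type*) [Fintype X] [Nonempty X] (n : ℕ) (hn : 1 ≤ n)
    (q : X → Fin k → ℝ) (φ : X → X) (c : Fin k → ℝ) (hc : ∀ i, 0 < c i)
    (x : Fin n → X) :
    ∫⁻ z, ENNReal.ofReal (∑ i, (z i - (1 / (n : ℝ)) * ∑ l, q (x l) i) ^ 2)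
        ∂ (lapMech c (fun i => c i * ((1 / (n : ℝ)) * ∑ l, q (φ (x l)) i)))
      ≤ ENNReal.ofReal (2 * ((⨆ u : X, ∑ i, (c i * q (φ u) i - q u i) ^ 2)
          + 2 * ∑ i, (c i) ^ 2)) :=
  stmt_17_general X n q φ c hc x
end
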